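/- Let 0 < β < α < 1 with α² + β² = 1. Upon a failed outcome of the filter, the resulting assemblage is unsteerable: the normalized components σ'_{a|x} = K^(1) σ^(α)_{a|x} K^(1)† / Tr[K^(1) ρ_B K^(1)†] (with ρ_B = α²|0⟩⟨0| + β²|1⟩⟨1|) satisfy σ'_{0|0} = |0⟩⟨0|, σ'_{1|0} = 0, σ'_{0|1} = σ'_{1|1} = ½|0⟩⟨0|; in particular {σ'_{a|x}} admits a local-hidden-state model σ'_{a|x} = Σ_λ P_Λ(λ) P(a|x,λ) ρ_λ with a single value of λ and ρ_λ = |0⟩⟨0|. -/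

import Mathlib

/-!
`K¹` is a multiple `k|0⟩⟨0|` of the projector onto `|0⟩`, so `K¹ σ K¹† = |k|² ⟨0|σ|0⟩ |0⟩⟨0|`
for every `σ`. After normalization by the trace of `K¹ ρ_B K¹†`, every component `σ'_{a|x}`
is therefore `|0⟩⟨0|` weighted by `⟨0|σ^(α)_{a|x}|0⟩ / ⟨0|ρ_B|0⟩`, and these weights form a
conditional distribution `P(a|x)`: a local-hidden-state model with the single hidden state
`|0⟩⟨0|`.
-/

open Matrix Finset
open scoped ComplexOrder

/-- Positive-semidefinite square root of a matrix (defined as `0` if the matrix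
is not positive semidefinite). -/
noncomputable def matSqrt {d : ℕ} (A : Matrix (Fin d) (Fin d) ℂ) :
    Matrix (Fin d) (Fin d) ℂ :=
  open Classical in
  if h : A.PosSemidef then
    (h.1.eigenvectorUnitary : Matrix (Fin d) (Fin d) ℂ) *
      diagonal ((↑) ∘ (√·) ∘ h.1.eigenvalues) *
      (star h.1.eigenvectorUnitary : Matrix (Fin d) (Fin d) ℂ)
  else 0

/-- Fidelity between positive semidefinite matrices: `F(A,B) = Tr[√(√A · B · √A)]`. -/
noncomputable def mFid {d : ℕ} (A B : Matrix (Fin d) (Fin d) ℂ) : ℝ :=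
  (matSqrt (matSqrt A * B * matSqrt A)).trace.re

/-- The standard basis vector `|0⟩` of `ℂ²`. -/
def e0 : Fin 2 → ℂ := ![1, 0]

/-- The standard basis vector `|1⟩` of `ℂ²`. -/
def e1 : Fin 2 → ℂ := ![0, 1]

/-- The projector `|0⟩⟨0|`. -/
def P00 : Matrix (Fin 2) (Fin 2) ℂ := vecMulVec e0 (star e0)

/-- The projector `|1⟩⟨1|`. -/
def P11 : Matrix (Fin 2) (Fin 2) ℂ := vecMulVec e1 (star e1)

/-- The Kraus operator `K⁰ = (β/α)|0⟩⟨0| + |1⟩⟨1|` of the successful filter outcome. -/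
noncomputable def K0 (α β : ℝ) : Matrix (Fin 2) (Fin 2) ℂ :=
  ((β / α : ℝ) : ℂ) • P00 + P11

/-- The Kraus operator `K¹ = (√(α²−β²)/α)|0⟩⟨0|` of the failed filter outcome. -/
noncomputable def K1 (α β : ℝ) : Matrix (Fin 2) (Fin 2) ℂ :=
  ((Real.sqrt (α ^ 2 - β ^ 2) / α : ℝ) : ℂ) • P00

/-- Bob's reduced state `ρ_B = α²|0⟩⟨0| + β²|1⟩⟨1|` of the assemblage `Σ^(α)`. -/
noncomputable def ρB (α β : ℝ) : Matrix (Fin 2) (Fin 2) ℂ :=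
  ((α ^ 2 : ℝ) : ℂ) • P00 + ((β ^ 2 : ℝ) : ℂ) • P11

/-- The vector `|α₊⟩ = α|0⟩ + β|1⟩`. -/
def ketαp (α β : ℝ) : Fin 2 → ℂ := ![(α : ℂ), (β : ℂ)]

/-- The vector `|α₋⟩ = α|0⟩ − β|1⟩`. -/
def ketαm (α β : ℝ) : Fin 2 → ℂ := ![(α : ℂ), -(β : ℂ)]

/-- The vector `|+⟩ = (|0⟩+|1⟩)/√2`. -/
noncomputable def ketp : Fin 2 → ℂ :=
  ![(1 / Real.sqrt 2 : ℝ), (1 / Real.sqrt 2 : ℝ)]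

/-- The vector `|−⟩ = (|0⟩−|1⟩)/√2`. -/
noncomputable def ketm : Fin 2 → ℂ :=
  ![(1 / Real.sqrt 2 : ℝ), (-(1 / Real.sqrt 2) : ℝ)]

/-- The assemblage `Σ^(α)` with components `σ^(α)_{a|x}` (first index `a`, second `x`):
`σ^(α)_{0|0} = α²|0⟩⟨0|`, `σ^(α)_{1|0} = β²|1⟩⟨1|`,
`σ^(α)_{0|1} = ½|α₊⟩⟨α₊|`, `σ^(α)_{1|1} = ½|α₋⟩⟨α₋|`. -/
noncomputable def σα (α β : ℝ) (a x : Fin 2) : Matrix (Fin 2) (Fin 2) ℂ :=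
  if x = 0 then
    if a = 0 then ((α ^ 2 : ℝ) : ℂ) • P00 else ((β ^ 2 : ℝ) : ℂ) • P11
  else
    if a = 0 then (1 / 2 : ℂ) • vecMulVec (ketαp α β) (star (ketαp α β))
    else (1 / 2 : ℂ) • vecMulVec (ketαm α β) (star (ketαm α β))

/-- The singlet assemblage `Σ^{Φ⁺}` with components
`σ^{Φ⁺}_{0|0} = ½|0⟩⟨0|`, `σ^{Φ⁺}_{1|0} = ½|1⟩⟨1|`,
`σ^{Φ⁺}_{0|1} = ½|+⟩⟨+|`, `σ^{Φ⁺}_{1|1} = ½|−⟩⟨−|`. -/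
noncomputable def σΦ (a x : Fin 2) : Matrix (Fin 2) (Fin 2) ℂ :=
  if x = 0 then
    if a = 0 then (1 / 2 : ℂ) • P00 else (1 / 2 : ℂ) • P11
  else
    if a = 0 then (1 / 2 : ℂ) • vecMulVec ketp (star ketp)
    else (1 / 2 : ℂ) • vecMulVec ketm (star ketm)

/-- The assemblage obtained after a failed filter outcome:
`σ'_{a|x} = K¹ σ^(α)_{a|x} K¹† / Tr[K¹ ρ_B K¹†]`. -/
noncomputable def σfail (α β : ℝ) (a x : Fin 2) : Matrix (Fin 2) (Fin 2) ℂ :=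
  ((K1 α β * ρB α β * (K1 α β)ᴴ).trace)⁻¹ • (K1 α β * σα α β a x * (K1 α β)ᴴ)

lemma P00_conjTranspose : P00ᴴ = P00 := by
  ext i j
  fin_cases i <;> fin_cases j <;> simp [P00, e0, vecMulVec]

lemma P00_mul_mul_P00 (M : Matrix (Fin 2) (Fin 2) ℂ) : P00 * M * P00 = M 0 0 • P00 := by
  ext i j
  fin_cases i <;> fin_cases j <;> simp [P00, e0, vecMulVec, Matrix.mul_apply, Fin.sum_univ_two]

lemma trace_P00 : P00.trace = 1 := by
  simp [P00, e0, vecMulVec, Matrix.trace, Fin.sum_univ_two]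

lemma smul_P00_sandwich (k : ℂ) (M : Matrix (Fin 2) (Fin 2) ℂ) :
    (k • P00) * M * (k • P00)ᴴ = (k * star k * M 0 0) • P00 := by
  rw [conjTranspose_smul, P00_conjTranspose, smul_mul_assoc, smul_mul_assoc, mul_smul_comm,
    P00_mul_mul_P00, smul_smul, smul_smul, mul_right_comm]

lemma normalized_smul_P00_sandwich {k : ℂ} (hk : k ≠ 0) {ρ : Matrix (Fin 2) (Fin 2) ℂ}
    (hρ : ρ 0 0 ≠ 0) (σ : Matrix (Fin 2) (Fin 2) ℂ) :
    ((k • P00) * ρ * (k • P00)ᴴ).trace⁻¹ • ((k • P00) * σ * (k • P00)ᴴ) =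
      (σ 0 0 / ρ 0 0) • P00 := by
  have hk' : star k ≠ 0 := star_ne_zero.mpr hk
  rw [smul_P00_sandwich, smul_P00_sandwich, trace_smul, trace_P00, smul_eq_mul, mul_one,
    smul_smul]
  congr 1
  field_simp

lemma ρB_zero_zero (α β : ℝ) : ρB α β 0 0 = (α : ℂ) ^ 2 := by
  simp [ρB, P00, P11, e0, e1, vecMulVec]

/-- The response function `P(a|x)` of the one-state LHS model of the failed-filter assemblage. -/
noncomputable def failResponse : Fin 2 → Fin 2 → ℝ := ![![1, 1 / 2], ![0, 1 / 2]]

lemma failResponse_nonneg (a x : Fin 2) : 0 ≤ failResponse a x := by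
  fin_cases a <;> fin_cases x <;> norm_num [failResponse]

lemma sum_failResponse (x : Fin 2) : ∑ a, failResponse a x = 1 := by
  fin_cases x <;> norm_num [failResponse, Fin.sum_univ_two]

lemma σα_zero_zero (α β : ℝ) (a x : Fin 2) :
    σα α β a x 0 0 = (α : ℂ) ^ 2 * failResponse a x := by
  fin_cases a <;> fin_cases x <;>
    simp [σα, failResponse, P00, P11, e0, e1, ketαp, ketαm, vecMulVec] <;> ring

lemma σfail_eq_failResponse_smul_P00 {α β : ℝ} (hβ : 0 < β) (hβα : β < α) (a x : Fin 2) :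
    σfail α β a x = (failResponse a x : ℂ) • P00 := by
  have hα : α ≠ 0 := (hβ.trans hβα).ne'
  have hk : ((Real.sqrt (α ^ 2 - β ^ 2) / α : ℝ) : ℂ) ≠ 0 := by
    have : 0 < α ^ 2 - β ^ 2 := by nlinarith
    exact_mod_cast div_ne_zero (Real.sqrt_pos.mpr this).ne' hα
  have hρ : ρB α β 0 0 ≠ 0 := by rw [ρB_zero_zero]; exact_mod_cast pow_ne_zero 2 hα
  rw [σfail, K1, normalized_smul_P00_sandwich hk hρ, σα_zero_zero, ρB_zero_zero,
    mul_div_cancel_left₀ _ (by exact_mod_cast pow_ne_zero 2 hα)]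

theorem failed_filter_unsteerable_general (α β : ℝ) (hβ : 0 < β) (hβα : β < α) :
    σfail α β 0 0 = P00 ∧ σfail α β 1 0 = 0 ∧
      σfail α β 0 1 = (1 / 2 : ℂ) • P00 ∧ σfail α β 1 1 = (1 / 2 : ℂ) • P00 ∧
      ∃ P : Fin 2 → Fin 2 → ℝ, (∀ a x, 0 ≤ P a x) ∧ (∀ x, ∑ a, P a x = 1) ∧
        ∀ a x, σfail α β a x = ((P a x : ℝ) : ℂ) • P00 := by
  have h := σfail_eq_failResponse_smul_P00 hβ hβα
  refine ⟨?_, ?_, ?_, ?_, failResponse, failResponse_nonneg, sum_failResponse, h⟩ <;>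
    simp [h, failResponse]

/-- Upon a failed filter outcome, the resulting assemblage has
components `σ'_{0|0} = |0⟩⟨0|`, `σ'_{1|0} = 0`, `σ'_{0|1} = σ'_{1|1} = ½|0⟩⟨0|`;
in particular it admits a local-hidden-state model with a single hidden value `λ`
and hidden state `ρ_λ = |0⟩⟨0|`. -/
theorem failed_filter_unsteerable (α β : ℝ) (hβ : 0 < β) (hβα : β < α) (hα : α < 1)
    (hnorm : α ^ 2 + β ^ 2 = 1) :
    σfail α β 0 0 = P00 ∧ σfail α β 1 0 = 0 ∧
      σfail α β 0 1 = (1 / 2 : ℂ) • P00 ∧ σfail α β 1 1 = (1 / 2 : ℂ) • P00 ∧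
      ∃ P : Fin 2 → Fin 2 → ℝ, (∀ a x, 0 ≤ P a x) ∧ (∀ x, ∑ a, P a x = 1) ∧
        ∀ a x, σfail α β a x = ((P a x : ℝ) : ℂ) • P00 :=
  failed_filter_unsteerable_general α β hβ hβα
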